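/- bell(n) = bell₊(n): every matrix (q_ij) obtained as q_ij = tr[W(A_i ⊗ B_j)] for positive operators A_i, B_j with spectra in [0,1] (and A_0 = B_0 = I) on a finite-dimensional Hilbert space H and a state W on H ⊗ H can also be obtained as a convex combination of matrices of the form tr[W'(E_i ⊗ F_j)] with E_i, F_j projections, and hence (by convexity of bell(n)) lies in bell(n). -/
import Mathlib



/-- An orthogonal projection matrix. -/
def IsProjection {m : ℕ} (E : Matrix (Fin m) (Fin m) ℂ) : Prop :=
  E.IsHermitian ∧ E * E = E

open ComplexOrder in
/-- A density operator (statistical operator): positive semidefinite with trace one. -/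
def IsDensity {k : Type} [Fintype k] [DecidableEq k] (W : Matrix k k ℂ) : Prop :=
  W.PosSemidef ∧ W.trace = 1

open Kronecker in
/-- A matrix `p` lies in the quantum range `bell(n)`: it is realized by projections
`E i`, `F j` on a finite-dimensional Hilbert space and a state `W` on the tensor
product, via `p i j = tr[W (E i ⊗ F j)]` (with `E 0 = F 0 = I`). -/
def InBell (n : ℕ) (p : Matrix (Fin (n+1)) (Fin (n+1)) ℝ) : Prop :=
  p 0 0 = 1 ∧
  ∃ (m : ℕ) (E F : Fin n → Matrix (Fin m) (Fin m) ℂ)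
    (W : Matrix (Fin m × Fin m) (Fin m × Fin m) ℂ),
    (∀ i, IsProjection (E i)) ∧ (∀ j, IsProjection (F j)) ∧ IsDensity W ∧
    (∀ i : Fin n, (W * (E i ⊗ₖ (1 : Matrix (Fin m) (Fin m) ℂ))).trace = (p i.succ 0 : ℂ)) ∧
    (∀ j : Fin n, (W * ((1 : Matrix (Fin m) (Fin m) ℂ) ⊗ₖ F j)).trace = (p 0 j.succ : ℂ)) ∧
    (∀ i j : Fin n, (W * (E i ⊗ₖ F j)).trace = (p i.succ j.succ : ℂ))

open Kronecker ComplexOrder in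
/-- A matrix `p` lies in `bell₊(n)`: like `bell(n)` but with the projections replaced
by positive semidefinite operators with spectrum contained in `[0,1]`. -/
def InBellPlus (n : ℕ) (p : Matrix (Fin (n+1)) (Fin (n+1)) ℝ) : Prop :=
  p 0 0 = 1 ∧
  ∃ (m : ℕ) (A B : Fin n → Matrix (Fin m) (Fin m) ℂ)
    (W : Matrix (Fin m × Fin m) (Fin m × Fin m) ℂ),
    (∀ i, (A i).PosSemidef ∧ spectrum ℂ (A i) ⊆ Set.Icc (0 : ℂ) 1) ∧
    (∀ j, (B j).PosSemidef ∧ spectrum ℂ (B j) ⊆ Set.Icc (0 : ℂ) 1) ∧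
    IsDensity W ∧
    (∀ i : Fin n, (W * (A i ⊗ₖ (1 : Matrix (Fin m) (Fin m) ℂ))).trace = (p i.succ 0 : ℂ)) ∧
    (∀ j : Fin n, (W * ((1 : Matrix (Fin m) (Fin m) ℂ) ⊗ₖ B j)).trace = (p 0 j.succ : ℂ)) ∧
    (∀ i j : Fin n, (W * (A i ⊗ₖ B j)).trace = (p i.succ j.succ : ℂ))


open Matrix ComplexOrder in
lemma exists_sqrt {m : ℕ} {A : Matrix (Fin m) (Fin m) ℂ} (hA : A.PosSemidef)
    (hs : spectrum ℂ A ⊆ Set.Icc (0 : ℂ) 1) :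
    ∃ C : Matrix (Fin m) (Fin m) ℂ, C.IsHermitian ∧ C * C = A - A * A ∧ A * C = C * A := by
  have hH : A.IsHermitian := hA.1
  set U : Matrix (Fin m) (Fin m) ℂ := (hH.eigenvectorUnitary : Matrix (Fin m) (Fin m) ℂ) with hU
  have hUU : star U * U = 1 := Unitary.coe_star_mul_self hH.eigenvectorUnitary
  set lam := hH.eigenvalues with hlam
  have hge : ∀ i, 0 ≤ lam i := fun i => hA.eigenvalues_nonneg i
  have hle : ∀ i, lam i ≤ 1 := by
    intro i
    have h1 : (lam i : ℂ) ∈ spectrum ℂ A :=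
      spectrum.algebraMap_mem ℂ (hH.eigenvalues_mem_spectrum_real i)
    exact_mod_cast (hs h1).2
  set d : Fin m → ℂ := fun i => ((Real.sqrt (lam i * (1 - lam i)) : ℝ) : ℂ) with hd
  have hdstar : star d = d := by
    funext i
    simp [hd, Complex.star_def, Complex.conj_ofReal]
  have hspec : A = U * diagonal (Complex.ofReal ∘ lam) * star U := hH.spectral_theorem
  have key : ∀ (f g : Fin m → ℂ),
      (U * diagonal f * star U) * (U * diagonal g * star U) = U * diagonal (f * g) * star U := by
    intro f g
    simp only [mul_assoc]
    rw [← mul_assoc (star U) U, hUU, one_mul, ← mul_assoc (diagonal f), diagonal_mul_diagonal]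
    rfl
  have hfun : (d * d) = fun i => ((lam i : ℂ) - (lam i : ℂ) * (lam i : ℂ)) := by
    funext i
    simp only [Pi.mul_apply, hd]
    rw [← Complex.ofReal_mul, Real.mul_self_sqrt (by nlinarith [hge i, hle i])]
    push_cast; ring
  have hfun2 : (fun i => ((lam i : ℂ) - (lam i : ℂ) * (lam i : ℂ))) =
      fun i => (Complex.ofReal ∘ lam) i - ((Complex.ofReal ∘ lam) * (Complex.ofReal ∘ lam)) i := rfl
  have hdd : diagonal (d * d) = diagonal (Complex.ofReal ∘ lam)
      - diagonal ((Complex.ofReal ∘ lam) * (Complex.ofReal ∘ lam)) := by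
    rw [diagonal_sub, hfun, hfun2]
  refine ⟨U * diagonal d * star U, ?_, ?_, ?_⟩
  · unfold Matrix.IsHermitian
    rw [conjTranspose_mul, conjTranspose_mul, diagonal_conjTranspose, hdstar,
      ← Matrix.star_eq_conjTranspose U, ← Matrix.star_eq_conjTranspose (star U), star_star,
      mul_assoc]
  · rw [key, hdd, Matrix.mul_sub, Matrix.sub_mul]
    conv_rhs => rw [hspec]
    rw [key]
  · conv_lhs => rw [hspec]
    conv_rhs => rw [hspec]
    rw [key, key, mul_comm (Complex.ofReal ∘ lam) d]



open Matrix ComplexOrder in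
lemma proj_spec {m : ℕ} {E : Matrix (Fin m) (Fin m) ℂ} (hE : IsProjection E) :
    E.PosSemidef ∧ spectrum ℂ E ⊆ Set.Icc (0 : ℂ) 1 := by
  obtain ⟨hH, hE2⟩ := hE
  constructor
  · have h : E = Eᴴ * E := by rw [hH, hE2]
    rw [h]
    exact Matrix.posSemidef_conjTranspose_mul_self E
  · intro z hz
    have hz2 : z * z - z = 0 := by
      by_contra h
      rw [spectrum.mem_iff] at hz
      apply hz
      have expand : (z • (1 : Matrix (Fin m) (Fin m) ℂ) - E) * ((z - 1) • 1 + E)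
          = (z * z - z) • 1 := by
        simp only [Matrix.sub_mul, Matrix.mul_add, Matrix.add_mul, smul_mul_assoc,
          mul_smul_comm, hE2, smul_smul, one_mul, mul_one]
        module
      have expand' : ((z - 1) • (1 : Matrix (Fin m) (Fin m) ℂ) + E) * (z • 1 - E)
          = (z * z - z) • 1 := by
        simp only [Matrix.sub_mul, Matrix.mul_sub, Matrix.mul_add, Matrix.add_mul,
          smul_mul_assoc, mul_smul_comm, hE2, smul_smul, one_mul, mul_one]
        module
      refine ⟨⟨algebraMap ℂ _ z - E, (z * z - z)⁻¹ • ((z - 1) • 1 + E), ?_, ?_⟩, rfl⟩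
      · rw [Algebra.algebraMap_eq_smul_one, mul_smul_comm, expand, smul_smul,
          inv_mul_cancel₀ h, one_smul]
      · rw [Algebra.algebraMap_eq_smul_one, smul_mul_assoc, expand', smul_smul,
          inv_mul_cancel₀ h, one_smul]
    have : z = 0 ∨ z = 1 := by
      rcases mul_eq_zero.mp (show z * (z - 1) = 0 by ring_nf; linear_combination hz2) with h | h
      · exact Or.inl h
      · exact Or.inr (by linear_combination h)
    rcases this with h | h <;> subst h
    · exact ⟨le_refl _, zero_le_one⟩
    · exact ⟨zero_le_one, le_refl _⟩


namespace BellAux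

open Matrix

variable {m : ℕ}

def ι2 (m : ℕ) : Fin m × Fin m → Fin (m+m) × Fin (m+m) :=
  fun y => (Fin.castAdd m y.1, Fin.castAdd m y.2)

def emb (m : ℕ) : Matrix (Fin (m+m) × Fin (m+m)) (Fin m × Fin m) ℂ :=
  (1 : Matrix (Fin (m+m) × Fin (m+m)) (Fin (m+m) × Fin (m+m)) ℂ).submatrix id (ι2 m)

lemma ι2_injective : Function.Injective (ι2 m) := by
  intro a b h
  rw [ι2, Prod.mk.injEq] at h
  exact Prod.ext (Fin.castAdd_injective m m h.1) (Fin.castAdd_injective m m h.2)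

lemma emb_conjTranspose : (emb m)ᴴ =
    (1 : Matrix (Fin (m+m) × Fin (m+m)) (Fin (m+m) × Fin (m+m)) ℂ).submatrix (ι2 m) id := by
  rw [emb, conjTranspose_submatrix, conjTranspose_one]

lemma conj_emb (M : Matrix (Fin (m+m) × Fin (m+m)) (Fin (m+m) × Fin (m+m)) ℂ) :
    (emb m)ᴴ * M * emb m = M.submatrix (ι2 m) (ι2 m) := by
  rw [emb_conjTranspose, emb,
    show ((1 : Matrix (Fin (m+m) × Fin (m+m)) (Fin (m+m) × Fin (m+m)) ℂ).submatrix (ι2 m) id)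
      = (1 : Matrix (Fin (m+m) × Fin (m+m)) (Fin (m+m) × Fin (m+m)) ℂ).submatrix (ι2 m)
        (Equiv.refl _) from rfl,
    one_submatrix_mul,
    show ((1 : Matrix (Fin (m+m) × Fin (m+m)) (Fin (m+m) × Fin (m+m)) ℂ).submatrix id (ι2 m))
      = (1 : Matrix (Fin (m+m) × Fin (m+m)) (Fin (m+m) × Fin (m+m)) ℂ).submatrix
        (Equiv.refl _) (ι2 m) from rfl,
    mul_submatrix_one, submatrix_submatrix]
  congr

lemma emb_conjTranspose_mul_self : (emb m)ᴴ * emb m = 1 := by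
  have h := conj_emb (m := m) 1
  rw [Matrix.mul_one] at h
  rw [h]
  ext a b
  simp [submatrix_apply, one_apply, ι2_injective.eq_iff]

end BellAux

namespace BellAux
open Matrix Kronecker

variable {m : ℕ}

lemma trace_conj (W : Matrix (Fin m × Fin m) (Fin m × Fin m) ℂ)
    (X : Matrix (Fin (m+m) × Fin (m+m)) (Fin (m+m) × Fin (m+m)) ℂ) :
    (emb m * W * (emb m)ᴴ * X).trace = (W * X.submatrix (ι2 m) (ι2 m)).trace := by
  rw [show emb m * W * (emb m)ᴴ * X = (emb m * W) * ((emb m)ᴴ * X) by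
      simp only [Matrix.mul_assoc],
    trace_mul_comm,
    show (emb m)ᴴ * X * (emb m * W) = ((emb m)ᴴ * X * emb m) * W by
      simp only [Matrix.mul_assoc],
    trace_mul_comm, conj_emb]

lemma one_submatrix2 : ((1 : Matrix (Fin (m+m) × Fin (m+m)) (Fin (m+m) × Fin (m+m)) ℂ).submatrix
    (ι2 m) (ι2 m)) = 1 := by
  ext a b
  simp [submatrix_apply, one_apply, ι2_injective.eq_iff]

lemma trace_emb (W : Matrix (Fin m × Fin m) (Fin m × Fin m) ℂ) :
    (emb m * W * (emb m)ᴴ).trace = W.trace := by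
  have h := trace_conj W 1
  rw [Matrix.mul_one, one_submatrix2, Matrix.mul_one] at h
  exact h

open ComplexOrder in
lemma isDensity_emb {W : Matrix (Fin m × Fin m) (Fin m × Fin m) ℂ} (hW : IsDensity W) :
    IsDensity (emb m * W * (emb m)ᴴ) := by
  refine ⟨hW.1.mul_mul_conjTranspose_same _, ?_⟩
  rw [trace_emb]
  exact hW.2

lemma kron_submatrix (X Y : Matrix (Fin (m+m)) (Fin (m+m)) ℂ) :
    (X ⊗ₖ Y).submatrix (ι2 m) (ι2 m)
      = (X.submatrix (Fin.castAdd m) (Fin.castAdd m)) ⊗ₖ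
        (Y.submatrix (Fin.castAdd m) (Fin.castAdd m)) := by
  ext a b
  rfl

lemma one_submatrix : ((1 : Matrix (Fin (m+m)) (Fin (m+m)) ℂ).submatrix
    (Fin.castAdd m) (Fin.castAdd m)) = 1 := by
  ext a b
  simp [submatrix_apply, one_apply, (Fin.castAdd_injective m m).eq_iff]

noncomputable def dilate (X C : Matrix (Fin m) (Fin m) ℂ) :
    Matrix (Fin (m+m)) (Fin (m+m)) ℂ :=
  (fromBlocks X C C (1 - X)).submatrix finSumFinEquiv.symm finSumFinEquiv.symm

lemma dilate_submatrix (X C : Matrix (Fin m) (Fin m) ℂ) :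
    (dilate X C).submatrix (Fin.castAdd m) (Fin.castAdd m) = X := by
  ext a b
  rw [dilate]
  simp [submatrix_apply, finSumFinEquiv_symm_apply_castAdd]

lemma dilate_proj {X C : Matrix (Fin m) (Fin m) ℂ} (hX : X.IsHermitian) (hC : C.IsHermitian)
    (hCC : C * C = X - X * X) (hXC : X * C = C * X) :
    (dilate X C).IsHermitian ∧ dilate X C * dilate X C = dilate X C := by
  constructor
  · rw [dilate, Matrix.IsHermitian, conjTranspose_submatrix, fromBlocks_conjTranspose,
      hX.eq, hC.eq, conjTranspose_sub, conjTranspose_one, hX.eq]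
  · rw [dilate, submatrix_mul_equiv, fromBlocks_multiply]
    have h11 : X * X + C * C = X := by rw [hCC]; noncomm_ring
    have h12 : X * C + C * (1 - X) = C := by
      rw [Matrix.mul_sub, Matrix.mul_one, hXC]; noncomm_ring
    have h21 : C * X + (1 - X) * C = C := by
      rw [Matrix.sub_mul, Matrix.one_mul, hXC]; noncomm_ring
    have h22 : C * C + (1 - X) * (1 - X) = 1 - X := by rw [hCC]; noncomm_ring
    rw [h11, h12, h21, h22]

end BellAux

/-- `bell(n) = bell₊(n)`. -/
theorem bellN_eq_bellPlusN (n : ℕ) (p : Matrix (Fin (n+1)) (Fin (n+1)) ℝ) :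
    InBell n p ↔ InBellPlus n p := by
  constructor
  · rintro ⟨h00, m, E, F, W, hE, hF, hW, h1, h2, h3⟩
    exact ⟨h00, m, E, F, W, fun i => proj_spec (hE i), fun j => proj_spec (hF j), hW, h1, h2, h3⟩
  · rintro ⟨h00, m, A, B, W, hA, hB, hW, h1, h2, h3⟩
    choose CA hCAh hCAsq hCAc using fun i => exists_sqrt (hA i).1 (hA i).2
    choose CB hCBh hCBsq hCBc using fun j => exists_sqrt (hB j).1 (hB j).2
    refine ⟨h00, m + m, fun i => BellAux.dilate (A i) (CA i),
      fun j => BellAux.dilate (B j) (CB j),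
      BellAux.emb m * W * (BellAux.emb m).conjTranspose, ?_, ?_, ?_, ?_, ?_, ?_⟩
    · intro i
      exact BellAux.dilate_proj (hA i).1.1 (hCAh i) (hCAsq i) (hCAc i)
    · intro j
      exact BellAux.dilate_proj (hB j).1.1 (hCBh j) (hCBsq j) (hCBc j)
    · exact BellAux.isDensity_emb hW
    · intro i
      rw [BellAux.trace_conj, BellAux.kron_submatrix, BellAux.dilate_submatrix,
        BellAux.one_submatrix]
      exact h1 i
    · intro j
      rw [BellAux.trace_conj, BellAux.kron_submatrix, BellAux.dilate_submatrix,
        BellAux.one_submatrix]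
      exact h2 j
    · intro i j
      rw [BellAux.trace_conj, BellAux.kron_submatrix, BellAux.dilate_submatrix,
        BellAux.dilate_submatrix]
      exact h3 i j
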